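/- arXiv:1909.04649 — 8 statements merged into one kernel-verified Lean document; each statement's English description precedes it below -/
import Mathlib

section
/- Let H be a bipartite graph with parts U and W, and let g ∈ ℕ. Then H has girth at least 2g+2 if and only if for every subset {u₁,…,u_j} ⊆ U with j ≤ g, the union of neighborhoods satisfies |N(u₁) ∪ ⋯ ∪ N(u_j)| ≥ (∑_{i=1}^{j} |N(u_i)|) − (j−1). -/
open Finset

/-- One step of the `r`-neighbour bootstrap process: add every vertex having
at least `r` infected neighbours. -/
def bootStep {V : Type*} [Fintype V] [DecidableEq V] (G : SimpleGraph V)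
    [DecidableRel G.Adj] (r : ℕ) (A : Finset V) : Finset V :=
  A ∪ Finset.univ.filter fun v => r ≤ ((G.neighborFinset v) ∩ A).card

/-- `A₀` percolates if iterating the bootstrap step eventually infects every vertex. -/
def percolates {V : Type*} [Fintype V] [DecidableEq V] (G : SimpleGraph V)
    [DecidableRel G.Adj] (r : ℕ) (A₀ : Finset V) : Prop :=
  ∃ t : ℕ, (bootStep G r)^[t] A₀ = Finset.univ

/-- The closure of `A₀` under the bootstrap process (iterating `card V` times
reaches the fixed point). -/
def bootClosure {V : Type*} [Fintype V] [DecidableEq V] (G : SimpleGraph V)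
    [DecidableRel G.Adj] (r : ℕ) (A₀ : Finset V) : Finset V :=
  (bootStep G r)^[Fintype.card V] A₀

/-- `f k = ⌊√(2k + 0.25) + 2.5⌋`. -/
noncomputable def f (k : ℕ) : ℕ := ⌊Real.sqrt (2 * (k : ℝ) + 0.25) + 2.5⌋₊

/-!
For `S ⊆ U` let `H_S` be the subgraph of the edges of `H` at `S`. It is bipartite with parts `S`
and `N(S)`, it has `∑ u ∈ S, |N(u)|` edges, and all its cycles have length at most `2|S|`.

If the girth exceeds `2g` and `|S| ≤ g`, then `H_S` is a forest on `S ∪ N(S)`, so it has fewer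
edges than vertices, which is the inequality. Conversely, if `C` is a cycle of length `2m ≤ 2g`,
let `S` be its `m` vertices in `U`. On `S ∪ N(S)` the graph `H_S` is connected through `C` and is
not a forest, so it has at least as many edges as vertices, and the inequality fails for `S`.
-/

namespace SimpleGraph

variable {V : Type*} {G : SimpleGraph V}

section Finite

variable [Fintype V] [DecidableRel G.Adj]

theorem IsAcyclic.card_edgeFinset_lt [Nonempty V] (hG : G.IsAcyclic) :
    #G.edgeFinset < Fintype.card V := by
  classical
  obtain ⟨T, hGT, -, hT⟩ := connected_top.exists_isTree_le_of_le_of_isAcyclic le_top hG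
  rw [← hT.card_edgeFinset]
  exact Nat.lt_succ_of_le (card_le_card (edgeFinset_mono hGT))

theorem Connected.card_le_card_edgeFinset_of_not_isAcyclic (hG : G.Connected)
    (hcyc : ¬G.IsAcyclic) : Fintype.card V ≤ #G.edgeFinset := by
  have hle := hG.card_vert_le_card_edgeSet_add_one
  have hne : Nat.card G.edgeSet + 1 ≠ Nat.card V := fun h =>
    hcyc (isTree_iff_connected_and_card.mpr ⟨hG, h⟩).isAcyclic
  rw [Nat.card_eq_fintype_card, Nat.card_eq_fintype_card, ← edgeFinset_card] at hle hne
  omega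

variable [DecidableEq V] {s : Finset V}

theorem IsAcyclic.card_edgeFinset_lt_of_support_subset (hG : G.IsAcyclic)
    (hs : G.support ⊆ s) (hne : s.Nonempty) : #G.edgeFinset < #s := by
  have : Nonempty s := hne.coe_sort
  rw [← card_edgeFinset_induce_of_support_subset hs]
  convert (hG.induce s).card_edgeFinset_lt
  simp

theorem card_le_card_edgeFinset_of_support_subset (hs : G.support ⊆ s)
    (hconn : (G.induce s).Connected) (hcyc : ¬(G.induce s).IsAcyclic) :
    #s ≤ #G.edgeFinset := by
  rw [← card_edgeFinset_induce_of_support_subset hs]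
  convert hconn.card_le_card_edgeFinset_of_not_isAcyclic hcyc
  simp

end Finite

theorem Walk.IsCycle.not_isAcyclic_induce {s : Set V} {a : V} {c : G.Walk a a}
    (hc : c.IsCycle) (hs : ∀ v ∈ c.support, v ∈ s) : ¬(G.induce s).IsAcyclic := by
  have : (c.induce s hs).IsCycle := by
    rwa [← isCycle_map_iff_of_injective (f := (Embedding.induce (G := G) s).toHom)
      (Embedding.induce (G := G) s).injective, map_induce]
  exact fun h => h _ this

theorem Walk.connected_induce_of_forall_mem_or_adj {s : Set V} {a b : V} (p : G.Walk a b)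
    (hp : ∀ v ∈ p.support, v ∈ s)
    (hs : ∀ x ∈ s, x ∈ p.support ∨ ∃ u ∈ p.support, G.Adj u x) :
    (G.induce s).Connected := by
  classical
  have hreach : ∀ x (hx : x ∈ p.support),
      (G.induce s).Reachable ⟨a, hp a p.start_mem_support⟩ ⟨x, hp x hx⟩ := fun x hx =>
    ((p.induce s hp).takeUntil _ <| by
      rw [support_induce]; exact (List.mem_attachWith hp ⟨x, hp x hx⟩).mpr hx).reachable
  refine (connected_iff_exists_forall_reachable _).mpr
    ⟨⟨a, hp a p.start_mem_support⟩, fun ⟨x, hx⟩ => ?_⟩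
  rcases hs x hx with hxp | ⟨u, hup, hux⟩
  · exact hreach x hxp
  · exact (hreach u hup).trans (Adj.reachable hux)

theorem IsBipartiteWith.mem_iff_not_mem_of_adj {s t : Set V} (h : G.IsBipartiteWith s t)
    {v w : V} (hadj : G.Adj v w) : v ∈ s ↔ w ∉ s := by
  have := Set.disjoint_left.mp h.disjoint
  rcases h.mem_of_adj hadj with ⟨hv, hw⟩ | ⟨hv, hw⟩ <;> grind

section Cycles

variable {s t : Set V} [DecidablePred (· ∈ s)]

theorem IsBipartiteWith.two_mul_countP_tail_support_add (h : G.IsBipartiteWith s t) {u v : V}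
    (p : G.Walk u v) :
    2 * p.support.tail.countP (· ∈ s) + (if u ∈ s then 1 else 0) =
      p.length + (if v ∈ s then 1 else 0) := by
  induction p with
  | nil => simp
  | @cons u w v hadj p ih =>
    have := h.mem_iff_not_mem_of_adj hadj
    rw [Walk.support_cons, List.tail_cons, ← p.cons_tail_support, List.countP_cons,
      Walk.length_cons]
    by_cases hu : u ∈ s <;> by_cases hw : w ∈ s <;> simp_all <;> omega

theorem IsBipartiteWith.length_eq_two_mul_card_of_isCycle [DecidableEq V]
    (h : G.IsBipartiteWith s t) {u : V} {c : G.Walk u u} (hc : c.IsCycle) :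
    c.length = 2 * #{v ∈ c.support.toFinset | v ∈ s} := by
  have hfilter :
      {v ∈ c.support.toFinset | v ∈ s} = (c.support.tail.filter (· ∈ s)).toFinset := by
    ext v
    have := Walk.end_mem_tail_support hc.not_nil
    conv_lhs => rw [← c.cons_tail_support]
    simp only [mem_filter, List.mem_toFinset, List.mem_cons, List.mem_filter, decide_eq_true_eq]
    grind
  have := h.two_mul_countP_tail_support_add c
  rw [hfilter, List.toFinset_card_of_nodup (hc.support_nodup.filter _),
    ← List.countP_eq_length_filter]
  omega

end Cycles

theorem IsBipartiteWith.egirth_le_two_mul_card [DecidableEq V] {s : Finset V} {t : Set V}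
    (h : G.IsBipartiteWith s t) (hG : ¬G.IsAcyclic) : G.egirth ≤ 2 * #s := by
  obtain ⟨u, c, hc, hlen⟩ := exists_egirth_eq_length.mpr hG
  rw [hlen, h.length_eq_two_mul_card_of_isCycle hc]
  exact_mod_cast Nat.mul_le_mul_left 2 (card_le_card fun v hv => by simp_all)

section Star

variable [Fintype V] [DecidableEq V] [DecidableRel G.Adj] {S U W : Finset V}

theorem neighborFinset_between_biUnion_neighborFinset {u : V} (hu : u ∈ S) :
    (G.between S (S.biUnion fun u => G.neighborFinset u)).neighborFinset u =
      G.neighborFinset u := by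
  ext w
  simp only [mem_neighborFinset, between_adj, coe_biUnion, mem_coe, Set.mem_iUnion, exists_prop]
  exact ⟨And.left, fun h => ⟨h, .inl ⟨hu, u, hu, by simpa using h⟩⟩⟩

theorem IsBipartiteWith.isBipartiteWith_between_biUnion_neighborFinset
    (hG : G.IsBipartiteWith U W) (hS : S ⊆ U) :
    (G.between S (S.biUnion fun u => G.neighborFinset u)).IsBipartiteWith S
      (S.biUnion fun u => G.neighborFinset u) := by
  refine between_isBipartiteWith <| disjoint_coe.mpr <|
    (disjoint_biUnion_right _ _ _).mpr fun u hu => Finset.disjoint_left.mpr fun v hvS hvu => ?_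
  have hvW := hG.mem_of_mem_adj (mem_coe.mpr (hS hu)) ((mem_neighborFinset ..).mp hvu)
  exact Set.disjoint_left.mp hG.disjoint (mem_coe.mpr (hS hvS)) hvW

theorem IsBipartiteWith.card_edgeFinset_between_biUnion_neighborFinset
    (hG : G.IsBipartiteWith U W) (hS : S ⊆ U) :
    #(G.between S (S.biUnion fun u => G.neighborFinset u)).edgeFinset =
      ∑ u ∈ S, #(G.neighborFinset u) := by
  rw [← isBipartiteWith_sum_degrees_eq_card_edges
    (hG.isBipartiteWith_between_biUnion_neighborFinset hS)]
  refine sum_congr rfl fun u hu => ?_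
  rw [← card_neighborFinset_eq_degree, neighborFinset_between_biUnion_neighborFinset hu]

theorem IsBipartiteWith.sum_card_neighborFinset_lt (hG : G.IsBipartiteWith U W) (hS : S ⊆ U)
    (hSne : S.Nonempty) (hgirth : 2 * #S < G.egirth) :
    ∑ u ∈ S, #(G.neighborFinset u) < #S + #(S.biUnion fun u => G.neighborFinset u) := by
  have hbip := hG.isBipartiteWith_between_biUnion_neighborFinset hS
  have hacyc : (G.between S (S.biUnion fun u => G.neighborFinset u)).IsAcyclic := by
    by_contra hcyc
    exact ((egirth_anti between_le).trans (hbip.egirth_le_two_mul_card hcyc)).not_gt hgirth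
  rw [← hG.card_edgeFinset_between_biUnion_neighborFinset hS,
    ← card_union_of_disjoint (disjoint_coe.mp hbip.disjoint)]
  exact hacyc.card_edgeFinset_lt_of_support_subset
    (by simpa using isBipartiteWith_support_subset hbip) (hSne.mono subset_union_left)

theorem IsBipartiteWith.mem_edgeSet_between_biUnion_neighborFinset (hG : G.IsBipartiteWith U W)
    {a b : V} {p : G.Walk a b} (hS : ∀ v ∈ p.support, v ∈ U → v ∈ S) :
    ∀ e ∈ p.edges, e ∈ (G.between S (S.biUnion fun u => G.neighborFinset u)).edgeSet := by
  intro e he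
  induction e using Sym2.ind with | _ x y => ?_
  have hadj := p.adj_of_mem_edges he
  refine ⟨hadj, ?_⟩
  rcases hG.mem_of_adj hadj with ⟨hxU, -⟩ | ⟨-, hyU⟩
  · have hxS := hS x (p.fst_mem_support_of_mem_edges he) hxU
    exact .inl ⟨hxS, mem_biUnion.mpr ⟨x, hxS, (mem_neighborFinset ..).mpr hadj⟩⟩
  · have hyS := hS y (p.snd_mem_support_of_mem_edges he) hyU
    exact .inr ⟨mem_biUnion.mpr ⟨y, hyS, (mem_neighborFinset ..).mpr hadj.symm⟩, hyS⟩

theorem IsBipartiteWith.card_add_card_biUnion_le_sum_of_isCycle (hG : G.IsBipartiteWith U W)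
    {a : V} {c : G.Walk a a} (hc : c.IsCycle)
    (hS : ∀ v, v ∈ S ↔ v ∈ c.support ∧ v ∈ U) :
    #S + #(S.biUnion fun u => G.neighborFinset u) ≤ ∑ u ∈ S, #(G.neighborFinset u) := by
  set T := S.biUnion fun u => G.neighborFinset u
  have hSU : S ⊆ U := fun v hv => ((hS v).mp hv).2
  have hbip := hG.isBipartiteWith_between_biUnion_neighborFinset hSU
  have hsupp : (G.between S T).support ⊆ ((S ∪ T : Finset V) : Set V) := by
    rw [coe_union]
    exact isBipartiteWith_support_subset hbip
  have hedges :=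
    hG.mem_edgeSet_between_biUnion_neighborFinset fun v hv hvU => (hS v).mpr ⟨hv, hvU⟩
  set c' := c.transfer _ hedges
  have hc' : c'.IsCycle := hc.transfer hedges
  have hc'S : ∀ v ∈ S, v ∈ c'.support := fun v hv => by simpa [c'] using ((hS v).mp hv).1
  have hc'X : ∀ v ∈ c'.support, v ∈ ((S ∪ T : Finset V) : Set V) := fun v hv =>
    hsupp (mem_support_of_mem_walk_support c' hc'.not_nil hv)
  have hconn : ((G.between S T).induce (S ∪ T : Finset V)).Connected := by
    refine c'.connected_induce_of_forall_mem_or_adj hc'X fun x hx => ?_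
    rcases mem_union.mp hx with hxS | hxT
    · exact .inl (hc'S x hxS)
    · obtain ⟨u, huS, hux⟩ := mem_biUnion.mp hxT
      exact .inr ⟨u, hc'S u huS, (mem_neighborFinset ..).mp hux, .inl ⟨huS, hxT⟩⟩
  have := card_le_card_edgeFinset_of_support_subset hsupp hconn (hc'.not_isAcyclic_induce hc'X)
  rwa [hG.card_edgeFinset_between_biUnion_neighborFinset hSU,
    card_union_of_disjoint (disjoint_coe.mp hbip.disjoint)] at this

end Star

end SimpleGraph

theorem stmt_1_general {V : Type*} [Fintype V] [DecidableEq V]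
    (H : SimpleGraph V) [DecidableRel H.Adj]
    (U W : Finset V) (hdisj : Disjoint U W)
    (hbip : ∀ x y, H.Adj x y → (x ∈ U ∧ y ∈ W) ∨ (x ∈ W ∧ y ∈ U))
    (g : ℕ) :
    (2 * g + 2 : ℕ∞) ≤ H.egirth ↔
      ∀ S : Finset V, S ⊆ U → S.card ≤ g →
        (∑ u ∈ S, (H.neighborFinset u).card) - (S.card - 1) ≤
          (S.biUnion fun u => H.neighborFinset u).card := by
  have hH : H.IsBipartiteWith U W := ⟨disjoint_coe.mpr hdisj, hbip⟩
  constructor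
  · intro hgirth S hSU hSg
    rcases S.eq_empty_or_nonempty with rfl | hSne
    · simp
    have := hH.sum_card_neighborFinset_lt hSU hSne <| calc
      (2 * #S : ℕ∞) ≤ 2 * g := by gcongr
      _ < 2 * g + 2 := by exact_mod_cast (by omega : 2 * g < 2 * g + 2)
      _ ≤ H.egirth := hgirth
    omega
  · intro hS
    refine SimpleGraph.le_egirth.mpr fun a c hc => ?_
    set S := {v ∈ c.support.toFinset | v ∈ U}
    have hlen : c.length = 2 * #S := hH.length_eq_two_mul_card_of_isCycle hc
    suffices g < #S by
      rw [hlen]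
      exact_mod_cast (by omega : 2 * g + 2 ≤ 2 * #S)
    by_contra! hSg
    have := hc.three_le_length
    have := hH.card_add_card_biUnion_le_sum_of_isCycle hc (S := S) (by simp [S])
    have := hS S (fun v hv => (mem_filter.mp hv).2) hSg
    omega

theorem stmt_1 {V : Type*} [Fintype V] [DecidableEq V]
    (H : SimpleGraph V) [DecidableRel H.Adj]
    (U W : Finset V) (hdisj : Disjoint U W) (hcover : U ∪ W = Finset.univ)
    (hbip : ∀ x y, H.Adj x y → (x ∈ U ∧ y ∈ W) ∨ (x ∈ W ∧ y ∈ U))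
    (g : ℕ) :
    (2 * g + 2 : ℕ∞) ≤ H.egirth ↔
      ∀ S : Finset V, S ⊆ U → S.card ≤ g →
        (∑ u ∈ S, (H.neighborFinset u).card) - (S.card - 1) ≤
          (S.biUnion fun u => H.neighborFinset u).card :=
  stmt_1_general H U W hdisj hbip g
end

section
/- Let r ≥ 1 and l with r ≤ l ≤ 2r−2. If G is a graph on n vertices with minimum degree δ(G) ≥ ⌊((r−1)/l)·n⌋ + l − r + 1, then every set A₀ ⊆ V(G) of size l percolates in the r-neighbour bootstrap process (i.e., iteratively infecting every vertex with at least r infected neighbours eventually infects all of V(G)). -/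
open Finset

/-!
If `A₀` does not percolate, its closure `B` is a proper subset with `l ≤ |B| = b` in which every
outside vertex has at most `r - 1` neighbours. Counting the edges between `B` and its complement
gives `b (δ + 1 - b) ≤ (r - 1)(n - b)`, and a single outside vertex gives `b ≤ n - δ + r - 2`.
The degree condition forces `l ≤ b ≤ δ + r - l`, and on that range the concave function
`b (δ + 1 - b) - (r - 1)(n - b)` is positive, since `l δ > (r - 1) n + l (l - r)`.
-/

section Inflationary

variable {α : Type*} {f : Finset α → Finset α}

lemma lt_card_iterate_succ_of_not_isFixedPt (hf : ∀ s, s ⊆ f s) (A : Finset α) :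
    ∀ t, ¬ Function.IsFixedPt f (f^[t] A) → t < #(f^[t + 1] A)
  | 0, h => (Nat.zero_le _).trans_lt (card_lt_card ((hf A).ssubset_of_ne (Ne.symm h)))
  | t + 1, h => by
    have hprev : ¬ Function.IsFixedPt f (f^[t] A) := fun hfix =>
      h (by rw [Function.iterate_succ_apply', hfix]; exact hfix)
    have hstrict : f^[t + 1] A ⊂ f^[t + 1 + 1] A := by
      rw [Function.iterate_succ_apply' f (t + 1)]
      exact (hf _).ssubset_of_ne (Ne.symm h)
    have := card_lt_card hstrict
    have := lt_card_iterate_succ_of_not_isFixedPt hf A t hprev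
    omega

lemma isFixedPt_iterate_card [Fintype α] (hf : ∀ s, s ⊆ f s) (A : Finset α) :
    Function.IsFixedPt f (f^[Fintype.card α] A) := by
  by_contra h
  have := lt_card_iterate_succ_of_not_isFixedPt hf A _ h
  have := card_le_univ (f^[Fintype.card α + 1] A)
  omega

end Inflationary

namespace SimpleGraph

variable {V : Type*} [Fintype V] [DecidableEq V] (G : SimpleGraph V) [DecidableRel G.Adj]

lemma sum_card_neighborFinset_inter_comm (s t : Finset V) :
    ∑ u ∈ s, #(G.neighborFinset u ∩ t) = ∑ v ∈ t, #(G.neighborFinset v ∩ s) := by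
  have hfilter : ∀ v (s : Finset V), G.neighborFinset v ∩ s = {u ∈ s | G.Adj v u} := by
    intro v s
    ext u
    simp [and_comm]
  simp only [hfilter]
  exact (sum_card_bipartiteAbove_eq_sum_card_bipartiteBelow _).trans
    (by simp only [bipartiteBelow, G.adj_comm])

lemma degree_add_one_le_card_add_card_sdiff {s : Finset V} {v : V} (hv : v ∈ s) :
    G.degree v + 1 ≤ #s + #(G.neighborFinset v \ s) := by
  have hinter : G.neighborFinset v ∩ s ⊆ s.erase v := fun u hu =>
    mem_erase.2 ⟨(G.ne_of_adj ((G.mem_neighborFinset v u).1 (mem_inter.1 hu).1)).symm,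
      (mem_inter.1 hu).2⟩
  have := card_le_card hinter
  rw [card_erase_of_mem hv] at this
  have := card_inter_add_card_sdiff (G.neighborFinset v) s
  rw [card_neighborFinset_eq_degree] at this
  have := card_pos.2 ⟨v, hv⟩
  omega

variable {G} {r : ℕ}

def IsBootClosed (G : SimpleGraph V) [DecidableRel G.Adj] (r : ℕ) (B : Finset V) : Prop :=
  ∀ v ∉ B, #(G.neighborFinset v ∩ B) < r

lemma subset_bootStep (A : Finset V) : A ⊆ bootStep G r A := subset_union_left

lemma subset_bootClosure (A : Finset V) : A ⊆ bootClosure G r A :=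
  Function.id_le_iterate_of_id_le subset_bootStep _ A

lemma isBootClosed_bootClosure (A : Finset V) : IsBootClosed G r (bootClosure G r A) := by
  intro v hv
  by_contra hr
  have hfix : bootStep G r (bootClosure G r A) = bootClosure G r A :=
    isFixedPt_iterate_card subset_bootStep A
  exact hv (hfix ▸ mem_union_right _ (mem_filter.2 ⟨mem_univ v, not_lt.1 hr⟩))

namespace IsBootClosed

variable {B : Finset V}

lemma card_mul_minDegree_succ_le (hB : IsBootClosed G r B) :
    #B * (G.minDegree + 1) + #Bᶜ ≤ #Bᶜ * r + #B * #B := by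
  have hinside : ∀ u ∈ B, G.minDegree + 1 ≤ #B + #(G.neighborFinset u ∩ Bᶜ) := fun u hu =>
    (Nat.succ_le_succ (G.minDegree_le_degree u)).trans
      (sdiff_eq_inter_compl _ B ▸ G.degree_add_one_le_card_add_card_sdiff hu)
  have houtside : ∀ v ∈ Bᶜ, #(G.neighborFinset v ∩ B) + 1 ≤ r := fun v hv =>
    hB v (mem_compl.1 hv)
  calc #B * (G.minDegree + 1) + #Bᶜ
      ≤ ∑ u ∈ B, (#B + #(G.neighborFinset u ∩ Bᶜ)) + #Bᶜ := by
        grw [← sum_le_sum hinside, sum_const, smul_eq_mul]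
    _ = #B * #B + ∑ v ∈ Bᶜ, (#(G.neighborFinset v ∩ B) + 1) := by
        rw [sum_add_distrib, sum_card_neighborFinset_inter_comm, sum_add_distrib]
        simp only [sum_const, smul_eq_mul, mul_one]
        ring
    _ ≤ #Bᶜ * r + #B * #B := by
        grw [sum_le_sum houtside, sum_const, smul_eq_mul, add_comm]

lemma minDegree_add_two_le (hB : IsBootClosed G r B) {v : V} (hv : v ∉ B) :
    G.minDegree + 2 ≤ r + #Bᶜ := by
  have := G.degree_add_one_le_card_add_card_sdiff (mem_compl.2 hv)
  rw [sdiff_eq_inter_compl, compl_compl] at this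
  have := hB v hv
  have := G.minDegree_le_degree v
  omega

end IsBootClosed

end SimpleGraph

lemma add_mul_lt_mul_of_div_add_succ_le {a k l d : ℕ} (hl : 0 < l) (h : a / l + k + 1 ≤ d) :
    a + l * k < l * d :=
  calc a + l * k < l * (a / l + 1) + l * k := by grw [← Nat.lt_mul_div_succ a hl]
    _ = l * (a / l + k + 1) := by ring
    _ ≤ l * d := by grw [h]

lemma false_of_bootstrap_counting {r l b c d : ℤ} (hrl : r ≤ l) (hl : l ≤ 2 * r - 2)
    (hd : (r - 1) * (b + c) + l * (l - r) < l * d) (hb : l ≤ b) (hc : 0 ≤ c)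
    (hout : d + 2 ≤ r + c)
    (hcut : b * (d + 1) + c ≤ c * r + b * b) : False := by
  have hn : l * (b + c + l - 2) < l * (2 * d) := by
    nlinarith [mul_nonneg (by linarith : (0 : ℤ) ≤ 2 * r - 2 - l)
      (by linarith : (0 : ℤ) ≤ b + c - l)]
  have hbd : b ≤ d + r - l := by
    linarith [lt_of_mul_lt_mul_left hn (by linarith : (0 : ℤ) ≤ l)]
  -- `b (d + 1 - b) + (r - 1) b - l (d + r - l) = (b - l)(d + r - l - b)`
  nlinarith [mul_nonneg (by linarith : (0 : ℤ) ≤ b - l) (by linarith : (0 : ℤ) ≤ d + r - l - b)]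

theorem stmt_2 {V : Type*} [Fintype V] [DecidableEq V]
    (G : SimpleGraph V) [DecidableRel G.Adj] (r l : ℕ)
    (hr : 1 ≤ r) (hrl : r ≤ l) (hl : l ≤ 2 * r - 2)
    (hdeg : (r - 1) * Fintype.card V / l + (l - r) + 1 ≤ G.minDegree)
    (A₀ : Finset V) (hA : A₀.card = l) :
    percolates G r A₀ := by
  by_contra hperc
  set B := bootClosure G r A₀
  obtain ⟨v, hv⟩ : ∃ v, v ∉ B := by
    by_contra! h
    exact hperc ⟨Fintype.card V, eq_univ_of_forall h⟩
  have hclosed := SimpleGraph.isBootClosed_bootClosure (G := G) (r := r) A₀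
  have hb : l ≤ #B := hA ▸ card_le_card (SimpleGraph.subset_bootClosure A₀)
  have hd := add_mul_lt_mul_of_div_add_succ_le (by omega) hdeg
  rw [← card_add_card_compl B] at hd
  exact false_of_bootstrap_counting (r := r) (l := l) (b := #B) (c := #Bᶜ) (d := G.minDegree)
    (by omega) (by omega) (mod_cast hd) (mod_cast hb) (by positivity)
    (mod_cast hclosed.minDegree_add_two_le hv) (mod_cast hclosed.card_mul_minDegree_succ_le)
end

section
/- Let r ≥ 1 and l with r ≤ l ≤ 2r−2, and let n ≥ 2l. There exists a graph G on n vertices with minimum degree δ(G) = ⌊((r−1)/l)·n + l − r⌋ containing a set A₀ of size l that does not percolate in the r-neighbour bootstrap process. Concretely, G consists of a clique U on l vertices and a clique W on n−l vertices, where every vertex of W has exactly r−1 neighbours in U, every vertex of U has ⌊((r−1)/l)n − (r−1)⌋ or ⌈((r−1)/l)n − (r−1)⌉ neighbours in W, and A₀ = U is closed under the bootstrap process. -/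
/-! Take for `U` the first `l` vertices and for `W` the remaining `n - l`, both cliques, and let
the `j`-th vertex of `W` see the `r - 1` vertices of `U` at positions
`j(r-1), j(r-1) + 1, …, j(r-1) + r - 2` modulo `l`. Going round `U` cyclically spreads the
`(r-1)(n-l)` cross edges evenly, so every vertex of `U` gets `⌊(r-1)(n-l)/l⌋` of them or one
more; hence the minimum degree is `l - 1 + ⌊(r-1)(n-l)/l⌋`, attained in `U`, the vertices of `W`
having degree `n - l - 1 + (r - 1)`, which is at least that since `n ≥ 2l`. A vertex outside `U`
has only `r - 1` neighbours in `U`, so `U` is closed and does not percolate. -/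

open Finset

section Bootstrap

variable {V : Type*} [Fintype V] [DecidableEq V] (G : SimpleGraph V) [DecidableRel G.Adj]
  {r : ℕ} {A : Finset V}

lemma bootStep_eq_self_of_forall_card_lt (hA : ∀ v ∉ A, #(G.neighborFinset v ∩ A) < r) :
    bootStep G r A = A := by
  refine Finset.union_eq_left.mpr fun v hv => ?_
  by_contra hvA
  exact (hA v hvA).not_ge (mem_filter.mp hv).2

lemma not_percolates_of_bootStep_eq_self (hA : bootStep G r A = A) (hAV : A ≠ univ) :
    ¬ percolates G r A := by
  rintro ⟨t, ht⟩
  exact hAV (Function.iterate_fixed hA t ▸ ht)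

end Bootstrap

lemma SimpleGraph.degree_eq_card_inter_add_card_inter {V : Type*} [Fintype V] [DecidableEq V]
    (G : SimpleGraph V) [DecidableRel G.Adj] {U W : Finset V} (hUW : Disjoint U W)
    (hcover : U ∪ W = univ) (v : V) :
    G.degree v = #(G.neighborFinset v ∩ U) + #(G.neighborFinset v ∩ W) := by
  rw [← card_union_of_disjoint (hUW.mono inter_subset_right inter_subset_right),
    ← inter_union_distrib_left, hcover, inter_univ, card_neighborFinset_eq_degree]

lemma SimpleGraph.neighborFinset_inter_eq_erase_of_isClique {V : Type*} [Fintype V]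
    [DecidableEq V] (G : SimpleGraph V) [DecidableRel G.Adj] {S : Finset V}
    (hS : G.IsClique (S : Set V)) {v : V} (hv : v ∈ S) :
    G.neighborFinset v ∩ S = S.erase v := by
  ext x
  simp only [mem_inter, mem_neighborFinset, mem_erase]
  exact ⟨fun ⟨hadj, hx⟩ => ⟨hadj.ne.symm, hx⟩,
    fun ⟨hxv, hx⟩ => ⟨hS hv hx hxv.symm, hx⟩⟩

lemma Nat.add_sub_one_div_eq_div_add_one {N l : ℕ} (hl : 0 < l) (h : 0 < N % l) :
    (N + l - 1) / l = N / l + 1 := by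
  have hmod := Nat.mod_lt N hl
  have hone : (N % l + l - 1) / l = 1 := Nat.div_eq_of_lt_le (by omega) (by omega)
  conv_lhs => rw [← Nat.mod_add_div N l]
  rw [show N % l + l * (N / l) + l - 1 = N % l + l - 1 + l * (N / l) by omega,
    Nat.add_mul_div_left _ _ hl, hone, add_comm]

lemma Nat.div_add_ite_eq_div_or_eq_ceil {l : ℕ} (hl : 0 < l) (N i : ℕ) :
    N / l + (if i < N % l then 1 else 0) = N / l ∨
      N / l + (if i < N % l then 1 else 0) = (N + l - 1) / l := by
  split_ifs with h
  · exact Or.inr (Nat.add_sub_one_div_eq_div_add_one hl (by omega)).symm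
  · exact Or.inl rfl

section CyclicBlock

variable {k l : ℕ}

def cyclicBlock (k l j : ℕ) : Finset ℕ := (range k).image fun s => (j * k + s) % l

lemma mem_cyclicBlock {j i : ℕ} : i ∈ cyclicBlock k l j ↔ ∃ s < k, (j * k + s) % l = i := by
  simp [cyclicBlock]

lemma cyclicBlock_subset_range (hkl : k ≤ l) (j : ℕ) : cyclicBlock k l j ⊆ range l := by
  intro i hi
  obtain ⟨s, hs, rfl⟩ := mem_cyclicBlock.mp hi
  exact mem_range.mpr (Nat.mod_lt _ (by omega))

lemma card_cyclicBlock (hkl : k ≤ l) (j : ℕ) : #(cyclicBlock k l j) = k := by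
  refine (card_image_of_injOn fun s hs s' hs' hss' => ?_).trans (card_range k)
  have hmod : s ≡ s' [MOD l] := Nat.ModEq.add_left_cancel' (j * k) hss'
  rw [coe_range, Set.mem_Iio] at hs hs'
  rwa [Nat.ModEq, Nat.mod_eq_of_lt (by omega), Nat.mod_eq_of_lt (by omega)] at hmod

/- The blocks are the residues mod `l` of the consecutive tiles `[jk, jk + k)` of `[0, km)`, so
`t ↦ t / k` matches the `t < km` with `t ≡ i [MOD l]` with the blocks containing `i`. -/
lemma card_filter_mem_cyclicBlock (hkl : k ≤ l) {i : ℕ} (hi : i < l) (m : ℕ) :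
    #{j ∈ range m | i ∈ cyclicBlock k l j} = k * m / l + if i < k * m % l then 1 else 0 := by
  have hcount := Nat.count_modEq_card (k * m) (hi.trans_le' (Nat.zero_le i)) i
  rw [Nat.mod_eq_of_lt hi, Nat.count_eq_card_filter_range] at hcount
  rw [← hcount]
  refine (card_bij (fun t _ => t / k) (fun t ht => ?_) (fun t ht t' ht' htt' => ?_)
    (fun j hj => ?_)).symm
  · rw [mem_filter, mem_range] at ht ⊢
    have hk : 0 < k := Nat.pos_of_ne_zero (by rintro rfl; simp at ht)
    refine ⟨(Nat.div_lt_iff_lt_mul hk).mpr (by linarith [ht.1]), mem_cyclicBlock.mpr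
      ⟨t % k, Nat.mod_lt t hk, ?_⟩⟩
    rw [Nat.div_add_mod', ht.2, Nat.mod_eq_of_lt hi]
  · simp only [mem_filter, mem_range] at ht ht'
    have hk : 0 < k := Nat.pos_of_ne_zero (by rintro rfl; simp at ht)
    have hmod : t % k ≡ t' % k [MOD l] := by
      refine Nat.ModEq.add_left_cancel' (k * (t / k)) ?_
      rw [Nat.div_add_mod, htt', Nat.div_add_mod]
      exact ht.2.trans ht'.2.symm
    rw [Nat.ModEq, Nat.mod_eq_of_lt ((Nat.mod_lt t hk).trans_le hkl),
      Nat.mod_eq_of_lt ((Nat.mod_lt t' hk).trans_le hkl)] at hmod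
    rw [← Nat.div_add_mod t k, ← Nat.div_add_mod t' k, htt', hmod]
  · rw [mem_filter, mem_range, mem_cyclicBlock] at hj
    obtain ⟨hjm, s, hs, hsi⟩ := hj
    refine ⟨j * k + s, mem_filter.mpr ⟨mem_range.mpr ?_, ?_⟩, ?_⟩
    · nlinarith
    · rw [Nat.ModEq, hsi, Nat.mod_eq_of_lt hi]
    · rw [mul_comm, Nat.mul_add_div (by omega), Nat.div_eq_of_lt hs, add_zero]

end CyclicBlock

section BlockGraph

variable {k l n : ℕ}

def lowSet (l n : ℕ) : Finset (Fin n) := {x | (x : ℕ) < l}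

def highSet (l n : ℕ) : Finset (Fin n) := {x | l ≤ (x : ℕ)}

lemma disjoint_lowSet_highSet : Disjoint (lowSet l n) (highSet l n) := by
  simp only [lowSet, highSet, disjoint_filter]
  omega

lemma lowSet_union_highSet : lowSet l n ∪ highSet l n = univ := by
  ext x
  simp only [lowSet, highSet, mem_union, mem_filter, mem_univ, true_and, iff_true]
  omega

lemma card_lowSet (hln : l ≤ n) : #(lowSet l n) = l := by
  rw [lowSet, Fin.card_filter_val_lt, min_eq_right hln]

lemma card_highSet (hln : l ≤ n) : #(highSet l n) = n - l := by
  have h := card_union_of_disjoint (disjoint_lowSet_highSet (l := l) (n := n))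
  rw [lowSet_union_highSet, card_univ, Fintype.card_fin, card_lowSet hln] at h
  omega

/-- The paper's graph with `U = lowSet l n`, `W = highSet l n` and `k = r - 1`: vertex `l + j`
of `W` is joined to the vertices of `U` labelled by `cyclicBlock k l j`. -/
def blockGraph (k l n : ℕ) : SimpleGraph (Fin n) :=
  SimpleGraph.fromRel fun x y => ((x : ℕ) < l ↔ (y : ℕ) < l) ∨
    (l ≤ (y : ℕ) ∧ (x : ℕ) ∈ cyclicBlock k l (y - l))

instance : DecidableRel (blockGraph k l n).Adj := by
  unfold blockGraph
  infer_instance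

lemma isClique_lowSet : (blockGraph k l n).IsClique (lowSet l n : Set (Fin n)) := by
  intro x hx y hy hxy
  simp only [lowSet, coe_filter, mem_univ, true_and] at hx hy
  exact (SimpleGraph.fromRel_adj _ _ _).mpr ⟨hxy, Or.inl (Or.inl (iff_of_true hx hy))⟩

lemma isClique_highSet : (blockGraph k l n).IsClique (highSet l n : Set (Fin n)) := by
  intro x hx y hy hxy
  simp only [highSet, coe_filter, mem_univ, true_and] at hx hy
  exact (SimpleGraph.fromRel_adj _ _ _).mpr
    ⟨hxy, Or.inl (Or.inl (iff_of_false hx.not_gt hy.not_gt))⟩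

lemma blockGraph_adj_iff {u w : Fin n} (hu : u ∈ lowSet l n) (hw : w ∈ highSet l n) :
    (blockGraph k l n).Adj u w ↔ (u : ℕ) ∈ cyclicBlock k l (w - l) := by
  simp only [lowSet, highSet, mem_filter, mem_univ, true_and] at hu hw
  simp only [blockGraph, SimpleGraph.fromRel_adj]
  constructor
  · rintro ⟨-, (h | ⟨-, h⟩) | (h | ⟨h, -⟩)⟩
    exacts [by omega, h, by omega, by omega]
  · exact fun h => ⟨fun huw => by omega, Or.inl (Or.inr ⟨hw, h⟩)⟩

lemma card_neighborFinset_inter_lowSet (hkl : k ≤ l) {w : Fin n} (hw : w ∈ highSet l n) :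
    #((blockGraph k l n).neighborFinset w ∩ lowSet l n) = k := by
  have hwn : l ≤ (w : ℕ) := (mem_filter.mp hw).2
  have hval : ((blockGraph k l n).neighborFinset w ∩ lowSet l n).map Fin.valEmbedding =
      cyclicBlock k l (w - l) := by
    ext i
    simp only [mem_map, mem_inter, SimpleGraph.mem_neighborFinset, Fin.valEmbedding_apply]
    constructor
    · rintro ⟨x, ⟨hadj, hx⟩, rfl⟩
      exact (blockGraph_adj_iff hx hw).mp hadj.symm
    · intro hi
      have hil : i < l := mem_range.mp (cyclicBlock_subset_range hkl _ hi)
      have hx : (⟨i, by omega⟩ : Fin n) ∈ lowSet l n := by simpa [lowSet] using hil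
      exact ⟨⟨i, by omega⟩, ⟨((blockGraph_adj_iff hx hw).mpr hi).symm, hx⟩, rfl⟩
  rw [← card_map, hval, card_cyclicBlock hkl]

lemma card_neighborFinset_inter_highSet (hkl : k ≤ l) {u : Fin n} (hu : u ∈ lowSet l n) :
    #((blockGraph k l n).neighborFinset u ∩ highSet l n) =
      k * (n - l) / l + if (u : ℕ) < k * (n - l) % l then 1 else 0 := by
  have hul : (u : ℕ) < l := (mem_filter.mp hu).2
  rw [← card_filter_mem_cyclicBlock hkl hul]
  refine card_bij (fun x _ => x - l) (fun x hx => ?_) (fun x hx y hy hxy => ?_) (fun j hj => ?_)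
  · rw [mem_inter, SimpleGraph.mem_neighborFinset] at hx
    have hxl : l ≤ (x : ℕ) := (mem_filter.mp hx.2).2
    rw [mem_filter, mem_range]
    exact ⟨by omega, (blockGraph_adj_iff hu hx.2).mp hx.1⟩
  · simp only [mem_inter, highSet, mem_filter, mem_univ, true_and] at hx hy
    exact Fin.ext (by omega)
  · rw [mem_filter, mem_range] at hj
    have hx : (⟨j + l, by omega⟩ : Fin n) ∈ highSet l n := by simp [highSet]
    refine ⟨⟨j + l, by omega⟩, mem_inter.mpr ⟨?_, hx⟩, by simp⟩
    rw [SimpleGraph.mem_neighborFinset, blockGraph_adj_iff hu hx]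
    simpa using hj.2

lemma degree_blockGraph_of_mem_lowSet (hkl : k ≤ l) (hln : l ≤ n) {u : Fin n}
    (hu : u ∈ lowSet l n) :
    (blockGraph k l n).degree u =
      l - 1 + (k * (n - l) / l + if (u : ℕ) < k * (n - l) % l then 1 else 0) := by
  rw [SimpleGraph.degree_eq_card_inter_add_card_inter _ disjoint_lowSet_highSet
      lowSet_union_highSet, SimpleGraph.neighborFinset_inter_eq_erase_of_isClique _
      isClique_lowSet hu, card_erase_of_mem hu, card_lowSet hln,
    card_neighborFinset_inter_highSet hkl hu]

lemma degree_blockGraph_of_mem_highSet (hkl : k ≤ l) (hln : l ≤ n) {w : Fin n}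
    (hw : w ∈ highSet l n) : (blockGraph k l n).degree w = k + (n - l - 1) := by
  rw [SimpleGraph.degree_eq_card_inter_add_card_inter _ disjoint_lowSet_highSet
      lowSet_union_highSet, SimpleGraph.neighborFinset_inter_eq_erase_of_isClique _
      isClique_highSet hw, card_erase_of_mem hw, card_highSet hln,
    card_neighborFinset_inter_lowSet hkl hw]

lemma minDegree_blockGraph (hkl : k ≤ l) (hl : 0 < l) (hn : 2 * l ≤ n) :
    (blockGraph k l n).minDegree = l - 1 + k * (n - l) / l := by
  have hln : l ≤ n := by omega
  have : Nonempty (Fin n) := ⟨⟨0, by omega⟩⟩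
  refine le_antisymm ?_ (SimpleGraph.le_minDegree_of_forall_le_degree _ _ fun v => ?_)
  · let u₀ : Fin n := ⟨l - 1, by omega⟩
    have hu₀ : u₀ ∈ lowSet l n := by simp [u₀, lowSet, hl]
    have hmod := Nat.mod_lt (k * (n - l)) hl
    refine ((blockGraph k l n).minDegree_le_degree u₀).trans_eq ?_
    rw [degree_blockGraph_of_mem_lowSet hkl hln hu₀, if_neg (by simp only [u₀]; omega),
      add_zero]
  · have hv : v ∈ lowSet l n ∪ highSet l n := lowSet_union_highSet ▸ mem_univ v
    rcases mem_union.mp hv with hv | hv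
    · rw [degree_blockGraph_of_mem_lowSet hkl hln hv, ← add_assoc]
      exact Nat.le_add_right _ _
    · -- `k (n - l) ≤ l (n - 2l + k)` because the difference is `(l - k)(n - 2l) ≥ 0`
      have hdiv : k * (n - l) / l ≤ n - 2 * l + k := by
        obtain ⟨d, rfl⟩ := Nat.exists_eq_add_of_le hn
        refine Nat.div_le_of_le_mul ?_
        rw [show 2 * l + d - l = l + d by omega, show 2 * l + d - 2 * l = d by omega]
        nlinarith
      rw [degree_blockGraph_of_mem_highSet hkl hln hv]
      omega

end BlockGraph

theorem stmt_3_general (r l n : ℕ) (hr : 1 ≤ r) (hrl : r ≤ l)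
    (hn : 2 * l ≤ n) :
    ∃ (G : SimpleGraph (Fin n)) (_ : DecidableRel G.Adj),
      G.minDegree = (r - 1) * n / l + (l - r) ∧
      ∃ U W : Finset (Fin n),
        Disjoint U W ∧ U ∪ W = Finset.univ ∧ U.card = l ∧
        (∀ x ∈ U, ∀ y ∈ U, x ≠ y → G.Adj x y) ∧
        (∀ x ∈ W, ∀ y ∈ W, x ≠ y → G.Adj x y) ∧
        (∀ w ∈ W, ((G.neighborFinset w) ∩ U).card = r - 1) ∧
        (∀ u ∈ U, ((G.neighborFinset u) ∩ W).card = (r - 1) * n / l - (r - 1) ∨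
          ((G.neighborFinset u) ∩ W).card = ((r - 1) * n + l - 1) / l - (r - 1)) ∧
        bootStep G r U = U ∧ ¬ percolates G r U := by
  have hl : 0 < l := by omega
  have hkl : r - 1 ≤ l := by omega
  have hsplit : (r - 1) * n = (r - 1) * (n - l) + l * (r - 1) := by
    rw [mul_comm l, ← Nat.mul_add, Nat.sub_add_cancel (by omega)]
  have hfloor : (r - 1) * n / l - (r - 1) = (r - 1) * (n - l) / l := by
    rw [hsplit, Nat.add_mul_div_left _ _ hl, Nat.add_sub_cancel]
  have hceil : ((r - 1) * n + l - 1) / l - (r - 1) = ((r - 1) * (n - l) + l - 1) / l := by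
    rw [hsplit, show (r - 1) * (n - l) + l * (r - 1) + l - 1 =
      (r - 1) * (n - l) + l - 1 + l * (r - 1) by omega, Nat.add_mul_div_left _ _ hl,
      Nat.add_sub_cancel]
  have hclosed : bootStep (blockGraph (r - 1) l n) r (lowSet l n) = lowSet l n := by
    refine bootStep_eq_self_of_forall_card_lt _ fun v hv => ?_
    have hvW : v ∈ highSet l n := by simpa [lowSet, highSet] using hv
    rw [card_neighborFinset_inter_lowSet hkl hvW]
    omega
  have hU : lowSet l n ≠ univ := by
    intro h
    have hlU : (⟨l, by omega⟩ : Fin n) ∈ lowSet l n := h ▸ mem_univ _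
    simp [lowSet] at hlU
  refine ⟨blockGraph (r - 1) l n, inferInstance, ?_, lowSet l n, highSet l n,
    disjoint_lowSet_highSet, lowSet_union_highSet, card_lowSet (by omega),
    fun x hx y hy => isClique_lowSet hx hy, fun x hx y hy => isClique_highSet hx hy,
    fun w hw => card_neighborFinset_inter_lowSet hkl hw, fun u hu => ?_, hclosed,
    not_percolates_of_bootStep_eq_self _ hclosed hU⟩
  · rw [minDegree_blockGraph hkl hl hn, hsplit, Nat.add_mul_div_left _ _ hl]
    omega
  · rw [card_neighborFinset_inter_highSet hkl hu, hfloor, hceil]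
    exact Nat.div_add_ite_eq_div_or_eq_ceil hl _ _

theorem stmt_3 (r l n : ℕ) (hr : 1 ≤ r) (hrl : r ≤ l) (hl : l ≤ 2 * r - 2)
    (hn : 2 * l ≤ n) :
    ∃ (G : SimpleGraph (Fin n)) (_ : DecidableRel G.Adj),
      G.minDegree = (r - 1) * n / l + (l - r) ∧
      ∃ U W : Finset (Fin n),
        Disjoint U W ∧ U ∪ W = Finset.univ ∧ U.card = l ∧
        (∀ x ∈ U, ∀ y ∈ U, x ≠ y → G.Adj x y) ∧
        (∀ x ∈ W, ∀ y ∈ W, x ≠ y → G.Adj x y) ∧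
        (∀ w ∈ W, ((G.neighborFinset w) ∩ U).card = r - 1) ∧
        (∀ u ∈ U, ((G.neighborFinset u) ∩ W).card = (r - 1) * n / l - (r - 1) ∨
          ((G.neighborFinset u) ∩ W).card = ((r - 1) * n + l - 1) / l - (r - 1)) ∧
        bootStep G r U = U ∧ ¬ percolates G r U :=
  stmt_3_general r l n hr hrl hn
end

section
/- Let G be a graph on n vertices, r ≥ 1, and let A ⊆ V(G) be a closed set for the r-neighbour bootstrap process with |A| = a and l ≤ a < n, where A contains a non-percolating initial set of size l. Then there exists a vertex x ∈ A whose degree in G is at most (r−1)·n/a + a − r. -/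
open Finset

/-
Closedness means every vertex outside `A` sends at most `r - 1` edges into `A`, so by double
counting at most `(n - a)(r - 1)` edges leave `A`, while each vertex of `A` has at most `a - 1`
neighbours inside `A`. Hence the degrees in `A` sum to at most `a(a - 1) + (n - a)(r - 1)`, and
some vertex of `A` has at most the average degree `(r - 1)(n - a)/a + a - 1 = (r - 1)n/a + a - r`.
-/

section Bootstrap

variable {V : Type*} [Fintype V] [DecidableEq V] (G : SimpleGraph V) [DecidableRel G.Adj]
  {r : ℕ} {A : Finset V}

theorem card_neighborFinset_inter_lt_of_bootStep_eq (hclosed : bootStep G r A = A) {v : V}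
    (hv : v ∉ A) : #(G.neighborFinset v ∩ A) < r := by
  by_contra! h
  exact hv (hclosed ▸ mem_union_right _ (mem_filter.mpr ⟨mem_univ v, h⟩))

theorem card_neighborFinset_inter_le_card_sub_one {x : V} (hx : x ∈ A) :
    #(G.neighborFinset x ∩ A) ≤ #A - 1 := by
  rw [← card_erase_of_mem hx]
  refine card_le_card fun y hy => ?_
  obtain ⟨hxy, hyA⟩ := mem_inter.mp hy
  exact mem_erase.mpr ⟨(G.ne_of_adj ((G.mem_neighborFinset x y).mp hxy)).symm, hyA⟩

theorem sum_card_neighborFinset_sdiff_eq_sum_compl (A : Finset V) :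
    ∑ x ∈ A, #(G.neighborFinset x \ A) = ∑ y ∈ Aᶜ, #(G.neighborFinset y ∩ A) := by
  have houter : ∀ x, G.neighborFinset x \ A = Aᶜ.bipartiteAbove G.Adj x := fun x => by
    ext y; simp [bipartiteAbove, and_comm]
  have hinner : ∀ y, G.neighborFinset y ∩ A = A.bipartiteBelow G.Adj y := fun y => by
    ext x; simp [bipartiteBelow, G.adj_comm, and_comm]
  simp only [houter, hinner]
  exact sum_card_bipartiteAbove_eq_sum_card_bipartiteBelow G.Adj

theorem sum_degree_le_of_bootStep_eq (hclosed : bootStep G r A = A) :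
    ∑ x ∈ A, G.degree x ≤ #A * (#A - 1) + (Fintype.card V - #A) * (r - 1) := by
  have hsplit : ∀ x, G.degree x = #(G.neighborFinset x ∩ A) + #(G.neighborFinset x \ A) :=
    fun x => (card_inter_add_card_sdiff _ _).symm
  have hinside : ∑ x ∈ A, #(G.neighborFinset x ∩ A) ≤ #A * (#A - 1) := by
    simpa using sum_le_sum fun x hx => card_neighborFinset_inter_le_card_sub_one G hx
  have hleaving : ∑ x ∈ A, #(G.neighborFinset x \ A) ≤ (Fintype.card V - #A) * (r - 1) := by
    rw [sum_card_neighborFinset_sdiff_eq_sum_compl, ← card_compl]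
    simpa using sum_le_sum fun y hy => (Nat.le_sub_one_of_lt
      (card_neighborFinset_inter_lt_of_bootStep_eq G hclosed (mem_compl.mp hy)) : _ ≤ r - 1)
  simp only [hsplit, sum_add_distrib]
  omega

theorem exists_degree_le_of_bootStep_eq (hr : 1 ≤ r) (hA : A.Nonempty)
    (hclosed : bootStep G r A = A) :
    ∃ x ∈ A, (G.degree x : ℝ) ≤ ((r : ℝ) - 1) * Fintype.card V / #A + #A - r := by
  refine exists_le_of_sum_le hA ?_
  have hcard : #A ≤ Fintype.card V := card_le_univ A
  have hApos : (0 : ℝ) < #A := by exact_mod_cast hA.card_pos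
  calc ∑ x ∈ A, (G.degree x : ℝ)
      = ((∑ x ∈ A, G.degree x : ℕ) : ℝ) := by push_cast; rfl
    _ ≤ ((#A * (#A - 1) + (Fintype.card V - #A) * (r - 1) : ℕ) : ℝ) := by
      exact_mod_cast sum_degree_le_of_bootStep_eq G hclosed
    _ = ∑ _x ∈ A, (((r : ℝ) - 1) * Fintype.card V / #A + #A - r) := by
      rw [sum_const, nsmul_eq_mul]
      push_cast [Nat.cast_sub hA.card_pos, Nat.cast_sub hr, Nat.cast_sub hcard]
      field_simp
      ring

end Bootstrap

theorem stmt_5_general {V : Type*} [Fintype V] [DecidableEq V]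
    (G : SimpleGraph V) [DecidableRel G.Adj] (r l : ℕ)
    (hr : 1 ≤ r) (hrl : r ≤ l)
    (A : Finset V) (hclosed : bootStep G r A = A)
    (hla : l ≤ A.card) :
    ∃ x ∈ A, (G.degree x : ℝ) ≤
      ((r : ℝ) - 1) * (Fintype.card V) / (A.card) + (A.card) - r :=
  exists_degree_le_of_bootStep_eq G hr (card_pos.mp (by omega)) hclosed

theorem stmt_5 {V : Type*} [Fintype V] [DecidableEq V]
    (G : SimpleGraph V) [DecidableRel G.Adj] (r l : ℕ)
    (hr : 1 ≤ r) (hrl : r ≤ l)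
    (A : Finset V) (hclosed : bootStep G r A = A)
    (hla : l ≤ A.card) (hAn : A.card < Fintype.card V)
    (hsub : ∃ A₀ ⊆ A, A₀.card = l ∧ ¬ percolates G r A₀) :
    ∃ x ∈ A, (G.degree x : ℝ) ≤
      ((r : ℝ) - 1) * (Fintype.card V) / (A.card) + (A.card) - r :=
  stmt_5_general G r l hr hrl A hclosed hla
end

section
/- Let a > 0 be a real number, r ≥ 2, l with r ≤ l ≤ 2r−2, and n ≥ l a natural number. Define d(a) = ((r−1)/a)·n + a − r. If l ≤ a ≤ ⌈((l−r+1)/l)·n⌉ + 2r − l − 3, then d(a) ≤ d(l) = ((r−1)/l)·n + l − r. -/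
/-!
The map `a ↦ c / a + a` is decreasing on `(0, √c]` and increasing on `[√c, ∞)`, and takes the
same value at `l` and `c / l`; hence on `[l, c / l]` it is maximal at `l`. With `c = (r - 1) n`
it remains to see that the upper end of the given interval does not exceed `(r - 1) n / l`,
which reduces to `(2r - 2 - l)(n - l) ≥ 0`.
-/

theorem div_add_le_div_add_of_le_of_le_div {K : Type*} [Field K] [LinearOrder K]
    [IsStrictOrderedRing K] {c l a : K} (hl : 0 < l) (hla : l ≤ a) (hac : a ≤ c / l) :
    c / a + a ≤ c / l + l := by
  have ha : 0 < a := hl.trans_le hla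
  have hal : a * l ≤ c := (le_div_iff₀ hl).1 hac
  rw [div_add' _ _ _ ha.ne', div_add' _ _ _ hl.ne', div_le_div_iff₀ ha hl]
  nlinarith [mul_nonneg (sub_nonneg.2 hla) (sub_nonneg.2 hal)]

theorem ceil_div_mul_add_le_div_mul {r l n : ℝ} (hl : 0 < l) (hlr : l ≤ 2 * r - 2)
    (hln : l ≤ n) :
    (⌈(l - r + 1) / l * n⌉ : ℝ) + 2 * r - l - 3 ≤ (r - 1) / l * n := by
  have hceil := Int.ceil_lt_add_one ((l - r + 1) / l * n)
  have key : (l - r + 1) / l * n + 2 * r - l - 2 ≤ (r - 1) / l * n := by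
    rw [← sub_nonneg]
    have : (r - 1) / l * n - ((l - r + 1) / l * n + 2 * r - l - 2)
        = (2 * r - 2 - l) * (n - l) / l := by
      field_simp
      ring
    rw [this]
    exact div_nonneg (mul_nonneg (by linarith) (by linarith)) hl.le
  linarith

theorem stmt_6_general (r l n : ℕ) (hr : 2 ≤ r) (hrl : r ≤ l) (hl : l ≤ 2 * r - 2)
    (hn : l ≤ n) (a : ℝ) (hal : (l : ℝ) ≤ a)
    (hau : a ≤ (⌈(((l : ℝ) - r + 1) / l) * n⌉ : ℝ) + 2 * r - l - 3) :
    ((r : ℝ) - 1) / a * n + a - r ≤ ((r : ℝ) - 1) / l * n + l - r := by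
  have hl0 : (0 : ℝ) < l := by exact_mod_cast (by omega : 0 < l)
  have hlr : (l : ℝ) + 2 ≤ 2 * r := by exact_mod_cast (by omega : l + 2 ≤ 2 * r)
  have hau' : a ≤ ((r : ℝ) - 1) * n / l := by
    rw [mul_div_right_comm]
    exact hau.trans (ceil_div_mul_add_le_div_mul hl0 (by linarith) (by exact_mod_cast hn))
  have hmax := div_add_le_div_add_of_le_of_le_div hl0 hal hau'
  simp only [div_mul_eq_mul_div]
  linarith

theorem stmt_6 (r l n : ℕ) (hr : 2 ≤ r) (hrl : r ≤ l) (hl : l ≤ 2 * r - 2)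
    (hn : l ≤ n) (a : ℝ) (ha : 0 < a) (hal : (l : ℝ) ≤ a)
    (hau : a ≤ (⌈(((l : ℝ) - r + 1) / l) * n⌉ : ℝ) + 2 * r - l - 3) :
    ((r : ℝ) - 1) / a * n + a - r ≤ ((r : ℝ) - 1) / l * n + l - r :=
  stmt_6_general r l n hr hrl hl hn a hal hau
end

section
/- Let G be a graph on n vertices, r, m ∈ ℕ with r ≥ 1, such that every pair of non-adjacent vertices x, y satisfies deg(x) + deg(y) ≥ n + 2r − m. Let A ⊆ V(G) be a closed set for the r-neighbour bootstrap process with r ≤ |A| < n. Then every vertex x ∈ A has at least r − m + 3 neighbours in V(G) \ A; moreover if x is not adjacent to all vertices of V(G) \ A, then deg_{Aᶜ}(x) ≥ r − m + 3 + (number of non-neighbours of x inside A). -/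
open Finset

/-!
A vertex `y ∉ A` has fewer than `r` neighbours in the closed set `A` and at most `|Aᶜ| - 1`
outside it, so `deg y ≤ r + n - |A| - 2`. If `x ∈ A` misses some `y ∉ A`, the Ore condition for
`x, y` together with `deg x = (|A| - 1 - #non-neighbours of x in A) + deg_{Aᶜ} x` gives the second
claim, hence the first. Otherwise `deg_{Aᶜ} x = n - |A|`; any `y ∉ A` misses some `z ∈ A`
(as `r ≤ |A|`), and the Ore condition for `z, y` with `deg z ≤ n - 1` gives `r - m + 3 ≤ n - |A|`.
-/

namespace SimpleGraph

variable {V : Type*} [Fintype V] [DecidableEq V] (G : SimpleGraph V) [DecidableRel G.Adj]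
  {r : ℕ} {A : Finset V}

lemma card_neighborFinset_inter_lt_of_bootStep_eq (hclosed : bootStep G r A = A) {y : V}
    (hy : y ∉ A) : #(G.neighborFinset y ∩ A) < r := by
  by_contra! h
  exact hy (hclosed ▸ mem_union_right _ (mem_filter.2 ⟨mem_univ _, h⟩))

lemma card_neighborFinset_inter_add_card_inter_compl (v : V) (A : Finset V) :
    #(G.neighborFinset v ∩ A) + #(G.neighborFinset v ∩ Aᶜ) = G.degree v := by
  rw [← card_neighborFinset_eq_degree, ← sdiff_eq_inter_compl, card_inter_add_card_sdiff]

lemma card_neighborFinset_inter_compl_lt {y : V} (hy : y ∉ A) :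
    #(G.neighborFinset y ∩ Aᶜ) < #Aᶜ :=
  card_lt_card ⟨inter_subset_right, fun h =>
    G.notMem_neighborFinset_self y (mem_of_mem_inter_left (h (mem_compl.2 hy)))⟩

lemma degree_add_two_le_of_bootStep_eq (hclosed : bootStep G r A = A) {y : V} (hy : y ∉ A) :
    G.degree y + 2 ≤ r + #Aᶜ := by
  have hin := G.card_neighborFinset_inter_lt_of_bootStep_eq hclosed hy
  have hout := G.card_neighborFinset_inter_compl_lt hy
  have hsplit := G.card_neighborFinset_inter_add_card_inter_compl y A
  omega

lemma degree_add_card_not_adj {x : V} (hx : x ∈ A) :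
    G.degree x + #((A.erase x).filter fun y => ¬ G.Adj x y) + 1 =
      #A + #(G.neighborFinset x ∩ Aᶜ) := by
  have hadj : (A.erase x).filter (G.Adj x) = G.neighborFinset x ∩ A := by
    ext z
    simp only [mem_filter, mem_erase, mem_inter, mem_neighborFinset]
    exact ⟨fun h => ⟨h.2, h.1.2⟩, fun h => ⟨⟨(G.ne_of_adj h.1).symm, h.2⟩, h.1⟩⟩
  have hA := card_filter_add_card_filter_not (s := A.erase x) (G.Adj x)
  rw [hadj, card_erase_of_mem hx] at hA
  have hsplit := G.card_neighborFinset_inter_add_card_inter_compl x A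
  have hApos := card_pos.2 ⟨x, hx⟩
  omega

lemma exists_mem_not_adj_of_bootStep_eq (hclosed : bootStep G r A = A) (hrA : r ≤ #A) {y : V}
    (hy : y ∉ A) : ∃ z ∈ A, ¬ G.Adj z y := by
  obtain ⟨z, hzA, hz⟩ := exists_mem_notMem_of_card_lt_card
    ((G.card_neighborFinset_inter_lt_of_bootStep_eq hclosed hy).trans_le hrA)
  exact ⟨z, hzA, fun h => hz (mem_inter.2 ⟨(G.mem_neighborFinset _ _).2 h.symm, hzA⟩)⟩

end SimpleGraph

theorem stmt_7_general {V : Type*} [Fintype V] [DecidableEq V]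
    (G : SimpleGraph V) [DecidableRel G.Adj] (r m : ℕ)
    (hOre : ∀ x y, x ≠ y → ¬ G.Adj x y →
      (Fintype.card V : ℤ) + 2 * r - m ≤ (G.degree x : ℤ) + (G.degree y : ℤ))
    (A : Finset V) (hclosed : bootStep G r A = A)
    (hrA : r ≤ A.card) (hAn : A.card < Fintype.card V)
    (x : V) (hx : x ∈ A) :
    ((r : ℤ) - m + 3 ≤ (((G.neighborFinset x) ∩ Aᶜ).card : ℤ)) ∧
    ((∃ y ∈ Aᶜ, ¬ G.Adj x y) →
      (r : ℤ) - m + 3 + (((A.erase x).filter fun y => ¬ G.Adj x y).card : ℤ) ≤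
        (((G.neighborFinset x) ∩ Aᶜ).card : ℤ)) := by
  have hcompl := card_compl_add_card A
  have hx_split := G.degree_add_card_not_adj hx
  have bound_of_missing : (∃ y ∈ Aᶜ, ¬ G.Adj x y) →
      (r : ℤ) - m + 3 + (((A.erase x).filter fun y => ¬ G.Adj x y).card : ℤ) ≤
        (((G.neighborFinset x) ∩ Aᶜ).card : ℤ) := by
    rintro ⟨y, hy, hxy⟩
    rw [mem_compl] at hy
    have hore := hOre x y (ne_of_mem_of_not_mem hx hy) hxy
    have hdeg_y := G.degree_add_two_le_of_bootStep_eq hclosed hy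
    omega
  refine ⟨?_, bound_of_missing⟩
  by_cases h : ∃ y ∈ Aᶜ, ¬ G.Adj x y
  · have := bound_of_missing h
    omega
  push Not at h
  have hx_full : #Aᶜ ≤ #(G.neighborFinset x ∩ Aᶜ) :=
    card_le_card fun z hz => mem_inter.2 ⟨(G.mem_neighborFinset _ _).2 (h z hz), hz⟩
  obtain ⟨y, hy⟩ : Aᶜ.Nonempty := card_pos.1 (by omega)
  rw [mem_compl] at hy
  obtain ⟨z, hzA, hzy⟩ := G.exists_mem_not_adj_of_bootStep_eq hclosed hrA hy
  have hore := hOre z y (ne_of_mem_of_not_mem hzA hy) hzy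
  have hdeg_y := G.degree_add_two_le_of_bootStep_eq hclosed hy
  have hdeg_z := G.degree_lt_card_verts z
  omega

theorem stmt_7 {V : Type*} [Fintype V] [DecidableEq V]
    (G : SimpleGraph V) [DecidableRel G.Adj] (r m : ℕ) (hr : 1 ≤ r)
    (hOre : ∀ x y, x ≠ y → ¬ G.Adj x y →
      (Fintype.card V : ℤ) + 2 * r - m ≤ (G.degree x : ℤ) + (G.degree y : ℤ))
    (A : Finset V) (hclosed : bootStep G r A = A)
    (hrA : r ≤ A.card) (hAn : A.card < Fintype.card V)
    (x : V) (hx : x ∈ A) :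
    ((r : ℤ) - m + 3 ≤ (((G.neighborFinset x) ∩ Aᶜ).card : ℤ)) ∧
    ((∃ y ∈ Aᶜ, ¬ G.Adj x y) →
      (r : ℤ) - m + 3 + (((A.erase x).filter fun y => ¬ G.Adj x y).card : ℤ) ≤
        (((G.neighborFinset x) ∩ Aᶜ).card : ℤ)) :=
  stmt_7_general G r m hOre A hclosed hrA hAn x hx
end

section
/- Let G be the disjoint union of two cliques of sizes ⌊n/2⌋ and ⌈n/2⌉ with n ≥ 2r+2 and r ≥ 1. Then G has minimum degree ⌊n/2⌋ − 1 and has no percolating set of any size s < 2r for the r-neighbour bootstrap process. -/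
open Finset

/-!
Bootstrap percolation cannot cross between components: if a set `C` of vertices contains all
neighbours of its members and the initial set meets `C` in fewer than `r` vertices, then no vertex of
`C` ever has `r` infected neighbours, so the infection inside `C` never grows. Of the two cliques,
one meets a set of fewer than `2r` vertices in fewer than `r` of them, while each clique has more
than `r` vertices.
-/

namespace SimpleGraph

variable {V : Type*} [Fintype V] [DecidableEq V] {G : SimpleGraph V} [DecidableRel G.Adj]
  {r : ℕ} {C : Finset V}

theorem bootStep_inter_eq_of_neighborFinset_subset (hC : ∀ v ∈ C, G.neighborFinset v ⊆ C)
    {S : Finset V} (hS : (S ∩ C).card < r) : bootStep G r S ∩ C = S ∩ C := by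
  ext v
  simp only [bootStep, mem_inter, mem_union, mem_filter, mem_univ, true_and]
  refine ⟨fun ⟨hv, hvC⟩ => ⟨hv.resolve_right fun hr => ?_, hvC⟩, fun ⟨hv, hvC⟩ => ⟨.inl hv, hvC⟩⟩
  have hsub : G.neighborFinset v ∩ S ⊆ S ∩ C := fun x hx =>
    mem_inter.mpr ⟨(mem_inter.mp hx).2, hC v hvC (mem_inter.mp hx).1⟩
  exact (hr.trans (card_le_card hsub)).not_gt hS

theorem iterate_bootStep_inter_eq_of_neighborFinset_subset
    (hC : ∀ v ∈ C, G.neighborFinset v ⊆ C) {S : Finset V} (hS : (S ∩ C).card < r) (t : ℕ) :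
    (bootStep G r)^[t] S ∩ C = S ∩ C := by
  induction t with
  | zero => rfl
  | succ t ih =>
    rw [Function.iterate_succ_apply', bootStep_inter_eq_of_neighborFinset_subset hC (ih ▸ hS), ih]

theorem not_percolates_of_neighborFinset_subset (hC : ∀ v ∈ C, G.neighborFinset v ⊆ C)
    (hrC : r ≤ C.card) {A₀ : Finset V} (hA₀ : (A₀ ∩ C).card < r) : ¬ percolates G r A₀ := by
  rintro ⟨t, ht⟩
  have h := iterate_bootStep_inter_eq_of_neighborFinset_subset hC hA₀ t
  rw [ht, univ_inter] at h
  exact (hA₀.trans_le hrC).ne (congrArg card h).symm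

theorem neighborFinset_eq_erase_of_adj_iff {A B : Finset V} (hdisj : Disjoint A B)
    (hadj : ∀ x y, G.Adj x y ↔ x ≠ y ∧ ((x ∈ A ∧ y ∈ A) ∨ (x ∈ B ∧ y ∈ B)))
    {v : V} (hv : v ∈ A) : G.neighborFinset v = A.erase v := by
  have hvB : v ∉ B := Finset.disjoint_left.mp hdisj hv
  ext y
  simp only [mem_neighborFinset, hadj, mem_erase, ne_comm (a := v)]
  tauto

theorem degree_eq_card_sub_one_of_adj_iff {A B : Finset V} (hdisj : Disjoint A B)
    (hadj : ∀ x y, G.Adj x y ↔ x ≠ y ∧ ((x ∈ A ∧ y ∈ A) ∨ (x ∈ B ∧ y ∈ B)))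
    {v : V} (hv : v ∈ A) : G.degree v = A.card - 1 := by
  rw [← card_neighborFinset_eq_degree, neighborFinset_eq_erase_of_adj_iff hdisj hadj hv,
    card_erase_of_mem hv]

end SimpleGraph

open SimpleGraph in
theorem stmt_12_general {V : Type*} [Fintype V] [DecidableEq V]
    (G : SimpleGraph V) [DecidableRel G.Adj] (r n : ℕ)
    (hn : Fintype.card V = n) (hn2 : 2 * r + 2 ≤ n)
    (A B : Finset V) (hdisj : Disjoint A B) (hcover : A ∪ B = Finset.univ)
    (hA : A.card = n / 2)
    (hadj : ∀ x y, G.Adj x y ↔ x ≠ y ∧ ((x ∈ A ∧ y ∈ A) ∨ (x ∈ B ∧ y ∈ B))) :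
    G.minDegree = n / 2 - 1 ∧
    ∀ s, s < 2 * r → ∀ A₀ : Finset V, A₀.card = s → ¬ percolates G r A₀ := by
  have hcard : A.card + B.card = n := by
    rw [← card_union_of_disjoint hdisj, hcover, card_univ, hn]
  have hadjB : ∀ x y, G.Adj x y ↔ x ≠ y ∧ ((x ∈ B ∧ y ∈ B) ∨ (x ∈ A ∧ y ∈ A)) := fun x y =>
    (hadj x y).trans (and_congr_right' or_comm)
  have hnA v (hv : v ∈ A) := neighborFinset_eq_erase_of_adj_iff hdisj hadj hv
  have hnB v (hv : v ∈ B) := neighborFinset_eq_erase_of_adj_iff hdisj.symm hadjB hv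
  obtain ⟨a, ha⟩ : A.Nonempty := card_pos.mp (by omega)
  have : Nonempty V := ⟨a⟩
  refine ⟨le_antisymm ?_ (le_minDegree_of_forall_le_degree _ _ fun v => ?_), ?_⟩
  · exact hA ▸ degree_eq_card_sub_one_of_adj_iff hdisj hadj ha ▸ G.minDegree_le_degree a
  · rcases mem_union.mp (hcover ▸ mem_univ v : v ∈ A ∪ B) with hv | hv
    · rw [degree_eq_card_sub_one_of_adj_iff hdisj hadj hv, hA]
    · rw [degree_eq_card_sub_one_of_adj_iff hdisj.symm hadjB hv]
      omega
  · rintro s hs A₀ rfl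
    have hsplit : (A₀ ∩ A).card + (A₀ ∩ B).card = A₀.card := by
      rw [← card_union_of_disjoint (disjoint_of_subset_left inter_subset_right
        (disjoint_of_subset_right inter_subset_right hdisj)), ← inter_union_distrib_left,
        hcover, inter_univ]
    rcases lt_or_ge (A₀ ∩ A).card r with h | h
    · exact not_percolates_of_neighborFinset_subset
        (fun v hv => hnA v hv ▸ erase_subset v A) (by omega) h
    · exact not_percolates_of_neighborFinset_subset
        (fun v hv => hnB v hv ▸ erase_subset v B) (by omega) (by omega)

theorem stmt_12 {V : Type*} [Fintype V] [DecidableEq V]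
    (G : SimpleGraph V) [DecidableRel G.Adj] (r n : ℕ)
    (hr : 1 ≤ r) (hn : Fintype.card V = n) (hn2 : 2 * r + 2 ≤ n)
    (A B : Finset V) (hdisj : Disjoint A B) (hcover : A ∪ B = Finset.univ)
    (hA : A.card = n / 2)
    (hadj : ∀ x y, G.Adj x y ↔ x ≠ y ∧ ((x ∈ A ∧ y ∈ A) ∨ (x ∈ B ∧ y ∈ B))) :
    G.minDegree = n / 2 - 1 ∧
    ∀ s, s < 2 * r → ∀ A₀ : Finset V, A₀.card = s → ¬ percolates G r A₀ :=
  stmt_12_general G r n hn hn2 A B hdisj hcover hA hadj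
end

section
/- Let U and W be the parts of a bipartite graph H of girth at least 2f(l−r)+2 in which every vertex of U has degree 2r−l−f(l−r) toward W, where l ≥ r and 3r ≥ 2l+f(l−r)+4. Let u₁,…,u_{f(l−r)} ∈ U be distinct and let S be a set of infected vertices in W with the property that at the moment of its infection, u_i has at least |W₀| − (l−r) − i + 1 infected neighbours in W_{t−1}, where W₀ ⊆ W has size l−r+f(l−r) and W_{t−1} ⊇ W₀. Then |W_{t−1}| > |W₀| + (f(l−r)−1)(|W₀| − (l−r) − f(l−r)). -/
open Finset

/-! The stars joining each `u i` to its infected neighbours in `W_{t-1}` form a subgraph of `H`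
in which every edge meets one of the `n = f (l - r)` centres. Such a graph has no cycle longer
than `2n`, so the girth condition makes it a forest, and a forest has fewer edges than vertices:
the neighbourhoods overlap in at most `n - 1` vertices in all. Summing the lower bounds
`|W₀| - (l - r) - i` over the centres then beats the claimed bound on `|W_{t-1}|` because
`(f k - 1)(f k - 2) ≥ 2k + 2`. -/

namespace SimpleGraph

variable {V : Type*} [DecidableEq V] {G : SimpleGraph V}

lemma Walk.length_add_le_two_mul_countP_tail {A : Finset V}
    (hA : ∀ ⦃x y⦄, G.Adj x y → x ∈ A ∨ y ∈ A) {a b : V} (p : G.Walk a b) :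
    (p.length : ℤ) + (if b ∈ A then 1 else 0) ≤
      2 * (p.support.tail.countP (· ∈ A) : ℤ) + (if a ∈ A then 1 else 0) := by
  induction p with
  | nil => simp
  | @cons a c b hac q ih =>
    rw [Walk.support_cons, List.tail_cons, ← Walk.cons_tail_support q, List.countP_cons,
      Walk.length_cons]
    rcases hA hac with ha | hc <;> grind

lemma Walk.IsCycle.length_le_two_mul_card {A : Finset V}
    (hA : ∀ ⦃x y⦄, G.Adj x y → x ∈ A ∨ y ∈ A) {v : V} {c : G.Walk v v} (hc : c.IsCycle) :
    c.length ≤ 2 * #A := by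
  have hcount := c.length_add_le_two_mul_countP_tail hA
  have hA' : c.support.tail.countP (· ∈ A) ≤ #A := by
    rw [List.countP_eq_length_filter, ← List.toFinset_card_of_nodup (hc.support_nodup.filter _)]
    refine card_le_card fun x hx => ?_
    simp only [List.mem_toFinset, List.mem_filter, decide_eq_true_eq] at hx
    exact hx.2
  simp only [add_le_add_iff_right] at hcount
  omega

lemma isAcyclic_of_two_mul_card_lt_egirth {A : Finset V}
    (hA : ∀ ⦃x y⦄, G.Adj x y → x ∈ A ∨ y ∈ A) (h : (2 * #A : ℕ∞) < G.egirth) :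
    G.IsAcyclic := fun _ c hc => by
  have := (egirth_le_length hc).trans_lt' h
  have := hc.length_le_two_mul_card hA
  norm_cast at *
  omega

lemma IsAcyclic.card_edgeFinset_le [Fintype V] [DecidableRel G.Adj]
    (hG : G.IsAcyclic) {s : Finset V} (hs : G.support ⊆ s) : #G.edgeFinset ≤ #s - 1 := by
  classical
  rcases s.eq_empty_or_nonempty with rfl | ⟨x, hx⟩
  · simp_all [edgeFinset_eq_empty, ← support_eq_bot_iff]
  · have : Nonempty s := ⟨⟨x, hx⟩⟩
    obtain ⟨T, hle, -, hT⟩ := (connected_top (V := s)).exists_isTree_le_of_le_of_isAcyclic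
      le_top (hG.induce s)
    rw [← card_edgeFinset_induce_of_support_subset hs]
    have hcard := hT.card_edgeFinset
    rw [Fintype.card_coe] at hcard
    calc _ ≤ #T.edgeFinset := by convert card_le_card (edgeFinset_mono hle)
      _ = #s - 1 := by omega

theorem sum_card_le_card_biUnion_add_of_two_mul_lt_egirth [Fintype V] [DecidableRel G.Adj]
    {n : ℕ} {u : Fin n → V} (hu : Function.Injective u) {N : Fin n → Finset V}
    (hN : ∀ i, N i ⊆ G.neighborFinset (u i)) (hsep : ∀ i j, u i ∉ N j)
    (hG : (2 * n : ℕ∞) < G.egirth) :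
    ∑ i, #(N i) ≤ #(univ.biUnion N) + n - 1 := by
  classical
  set F := fromRel fun x y => ∃ i, x = u i ∧ y ∈ N i
  have hcentres : #(univ.image u) ≤ n := card_image_le.trans_eq (card_fin n)
  have hFG : F ≤ G := by
    rintro x y ⟨-, ⟨i, rfl, hy⟩ | ⟨i, rfl, hx⟩⟩
    · exact (mem_neighborFinset _ _ _).1 (hN i hy)
    · exact ((mem_neighborFinset _ _ _).1 (hN i hx)).symm
  have hcover : ∀ ⦃x y⦄, F.Adj x y → x ∈ univ.image u ∨ y ∈ univ.image u := by
    rintro x y ⟨-, ⟨i, rfl, -⟩ | ⟨i, rfl, -⟩⟩ <;> simp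
  have hacyc : F.IsAcyclic := by
    refine isAcyclic_of_two_mul_card_lt_egirth hcover (lt_of_lt_of_le ?_ (egirth_anti hFG))
    refine lt_of_le_of_lt ?_ hG
    exact_mod_cast Nat.mul_le_mul_left 2 hcentres
  have hsupp : F.support ⊆ ↑(univ.image u ∪ univ.biUnion N) := by
    rintro x ⟨y, -, ⟨i, rfl, -⟩ | ⟨i, rfl, hx⟩⟩
    · exact mem_union_left _ (mem_image_of_mem u (mem_univ i))
    · exact mem_union_right _ (mem_biUnion.2 ⟨i, mem_univ i, hx⟩)
  have hedges : ∑ i, #(N i) ≤ #F.edgeFinset := by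
    rw [← card_sigma]
    refine card_le_card_of_injOn (fun p => s(u p.1, p.2)) ?_ ?_
    · rintro ⟨i, w⟩ hw
      simp only [mem_coe, mem_sigma, mem_univ, true_and] at hw
      simp only [mem_coe, mem_edgeFinset, mem_edgeSet, F, fromRel_adj]
      exact ⟨fun h => hsep i i (h ▸ hw), Or.inl ⟨i, rfl, hw⟩⟩
    · rintro ⟨i, w⟩ hw ⟨j, w'⟩ hw' h
      simp only [mem_coe, mem_sigma, mem_univ, true_and] at hw hw'
      rcases Sym2.eq_iff.1 h with ⟨hij, rfl⟩ | ⟨hiw, -⟩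
      · obtain rfl := hu hij
        rfl
      · exact absurd (hiw ▸ hw') (hsep i j)
  calc ∑ i, #(N i) ≤ #F.edgeFinset := hedges
    _ ≤ #(univ.image u ∪ univ.biUnion N) - 1 := hacyc.card_edgeFinset_le hsupp
    _ ≤ #(univ.biUnion N) + n - 1 := by
      have := card_union_le (univ.image u) (univ.biUnion N)
      omega

end SimpleGraph

lemma sum_fin_val_mul_two (n : ℕ) : (∑ i : Fin n, ((i : ℕ) : ℤ)) * 2 = n * (n - 1) := by
  rw [Fin.sum_univ_eq_sum_range (fun i => (i : ℤ))]
  induction n with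
  | zero => simp
  | succ n ih => rw [sum_range_succ, add_mul, ih]; push_cast; ring

lemma f_pos (k : ℕ) : 0 < f k :=
  Nat.floor_pos.2 (by linarith [Real.sqrt_nonneg (2 * (k : ℝ) + 0.25)])

lemma two_mul_add_two_le_f_sub_one_mul_f_sub_two (k : ℕ) :
    2 * (k : ℤ) + 2 ≤ ((f k : ℤ) - 1) * ((f k : ℤ) - 2) := by
  have hsq := Real.sq_sqrt (show (0 : ℝ) ≤ 2 * k + 0.25 by positivity)
  have hfloor : √(2 * (k : ℝ) + 0.25) + 2.5 < f k + 1 := Nat.lt_floor_add_one _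
  have hlt : 2 * (k : ℤ) < ((f k : ℤ) - 1) * ((f k : ℤ) - 2) := by
    have : 2 * (k : ℝ) < ((f k : ℝ) - 1) * ((f k : ℝ) - 2) := by
      nlinarith [Real.sqrt_nonneg (2 * (k : ℝ) + 0.25)]
    exact_mod_cast this
  obtain ⟨t, ht⟩ := Int.even_mul_succ_self ((f k : ℤ) - 2)
  have : ((f k : ℤ) - 1) * ((f k : ℤ) - 2) = t + t := by rw [← ht]; ring
  omega

theorem stmt_13_general {V : Type*} [Fintype V] [DecidableEq V]
    (H : SimpleGraph V) [DecidableRel H.Adj] (r l : ℕ)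
    (U W : Finset V) (hdisj : Disjoint U W)
    (hgirth : (2 * (f (l - r) : ℕ∞) + 2) ≤ H.egirth)
    (u : Fin (f (l - r)) → V) (hu : Function.Injective u) (huU : ∀ i, u i ∈ U)
    (W₀ Wt : Finset V) (hWt : Wt ⊆ W)
    (hW₀card : W₀.card = l - r + f (l - r))
    (hinf : ∀ i : Fin (f (l - r)),
      (W₀.card : ℤ) - ((l : ℤ) - r) - (i : ℕ) ≤ (((H.neighborFinset (u i)) ∩ Wt).card : ℤ)) :
    (W₀.card : ℤ) + ((f (l - r) : ℤ) - 1) * ((W₀.card : ℤ) - ((l : ℤ) - r) - f (l - r)) <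
      (Wt.card : ℤ) := by
  have hsep : ∀ i j, u i ∉ H.neighborFinset (u j) ∩ Wt := fun i j h =>
    Finset.disjoint_left.1 hdisj (huU i) (hWt (mem_inter.1 h).2)
  have hgirth' : (2 * f (l - r) : ℕ∞) < H.egirth := hgirth.trans_lt' (by norm_cast; omega)
  have hunion : ∑ i, (#(H.neighborFinset (u i) ∩ Wt) : ℤ) + 1 ≤ #Wt + f (l - r) := by
    have hcount := H.sum_card_le_card_biUnion_add_of_two_mul_lt_egirth hu
      (fun _ => inter_subset_left) hsep hgirth'
    have hsub : #(univ.biUnion fun i => H.neighborFinset (u i) ∩ Wt) ≤ #Wt :=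
      card_le_card (biUnion_subset.2 fun _ _ => inter_subset_right)
    have := f_pos (l - r)
    exact_mod_cast (show ∑ i, #(H.neighborFinset (u i) ∩ Wt) + 1 ≤ #Wt + f (l - r) by omega)
  have hsum : ∑ i : Fin (f (l - r)), ((W₀.card : ℤ) - ((l : ℤ) - r) - (i : ℕ)) ≤
      ∑ i, (#(H.neighborFinset (u i) ∩ Wt) : ℤ) :=
    sum_le_sum fun i _ => hinf i
  rw [sum_sub_distrib, sum_const, card_univ, Fintype.card_fin, nsmul_eq_mul] at hsum
  have hgauss := sum_fin_val_mul_two (f (l - r))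
  have hquad := two_mul_add_two_le_f_sub_one_mul_f_sub_two (l - r)
  have hlr : (l : ℤ) - r ≤ ((l - r : ℕ) : ℤ) := by omega
  rw [hW₀card] at hsum ⊢
  push_cast at hsum ⊢
  linarith

theorem stmt_13 {V : Type*} [Fintype V] [DecidableEq V]
    (H : SimpleGraph V) [DecidableRel H.Adj] (r l : ℕ)
    (hrl : r ≤ l) (h3r : 2 * l + f (l - r) + 4 ≤ 3 * r)
    (U W : Finset V) (hdisj : Disjoint U W) (hcover : U ∪ W = Finset.univ)
    (hbip : ∀ x y, H.Adj x y → (x ∈ U ∧ y ∈ W) ∨ (x ∈ W ∧ y ∈ U))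
    (hgirth : (2 * (f (l - r) : ℕ∞) + 2) ≤ H.egirth)
    (hUdeg : ∀ u ∈ U, ((H.neighborFinset u) ∩ W).card = 2 * r - l - f (l - r))
    (u : Fin (f (l - r)) → V) (hu : Function.Injective u) (huU : ∀ i, u i ∈ U)
    (W₀ Wt : Finset V) (hW₀ : W₀ ⊆ Wt) (hWt : Wt ⊆ W)
    (hW₀card : W₀.card = l - r + f (l - r))
    (hinf : ∀ i : Fin (f (l - r)),
      (W₀.card : ℤ) - ((l : ℤ) - r) - (i : ℕ) ≤ (((H.neighborFinset (u i)) ∩ Wt).card : ℤ)) :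
    (W₀.card : ℤ) + ((f (l - r) : ℤ) - 1) * ((W₀.card : ℤ) - ((l : ℤ) - r) - f (l - r)) <
      (Wt.card : ℤ) :=
  stmt_13_general H r l U W hdisj hgirth u hu huU W₀ Wt hWt hW₀card hinf
end
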